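/- arXiv:2209.07995 — 7 statements merged into one kernel-verified Lean document; each statement's English description precedes it below -/
import Mathlib

section
/- Duality of Askey–Wilson polynomials: with dual parameters ã = (q^{-1}abcd)^{1/2}, b̃ = ab/ã, c̃ = ac/ã, d̃ = ad/ã, one has R_n(a^{-1}q^{-m}; a,b,c,d | q) = R_m(ã^{-1}q^{-n}; ã,b̃,c̃,d̃ | q) for all m, n ≥ 0, with both sides equal to the terminating sum Σ_k [(q^{-n};q)_k (q^{n-1}abcd;q)_k (q^{-m};q)_k (q^m a²;q)_k] / [(q;q)_k (ab;q)_k (ac;q)_k (ad;q)_k] q^k. -/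
/-!
At `z = a⁻¹ q^{-m}` the two numerator factors `(az;q)_k (az⁻¹;q)_k` of `R_n` become
`(q^{-m};q)_k (q^m a²;q)_k`, and likewise for the dual polynomial at `ã⁻¹ q^{-n}`, where
`ã²q = abcd` turns `(q^{m-1}ãb̃c̃d̃;q)_k` into `(q^m a²;q)_k` and `(ã² q^n;q)_k` into
`(q^{n-1}abcd;q)_k`. Both sides thus share the summand, which vanishes for `k > m` and for
`k > n` because of the factors `(q^{-m};q)_k` and `(q^{-n};q)_k`.
-/

/-- q-shifted factorial `(b;q)_k`. -/
noncomputable def qp (q b : ℂ) (k : ℕ) : ℂ := ∏ j ∈ Finset.range k, (1 - b * q ^ j)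

/-- Askey–Wilson polynomial `R_n(z;a,b,c,d|q)` as a terminating ₄φ₃ sum. -/
noncomputable def AW (q a b c d z : ℂ) (n : ℕ) : ℂ :=
  ∑ k ∈ Finset.range (n + 1),
    qp q (q ^ (-(n : ℤ))) k * qp q (q ^ ((n : ℤ) - 1) * (a * b * c * d)) k *
      qp q (a * z) k * qp q (a * z⁻¹) k /
      (qp q q k * qp q (a * b) k * qp q (a * c) k * qp q (a * d) k) * q ^ k

open Finset

lemma qp_zpow_neg_natCast_of_lt {q : ℂ} (hq : q ≠ 0) {n k : ℕ} (h : n < k) :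
    qp q (q ^ (-(n : ℤ))) k = 0 := by
  apply prod_eq_zero (mem_range.mpr h)
  rw [← zpow_natCast q n, ← zpow_add₀ hq, neg_add_cancel, zpow_zero, sub_self]

noncomputable def awDualTerm (q a b c d : ℂ) (m n k : ℕ) : ℂ :=
  qp q (q ^ (-(n : ℤ))) k * qp q (q ^ ((n : ℤ) - 1) * (a * b * c * d)) k *
    qp q (q ^ (-(m : ℤ))) k * qp q (q ^ (m : ℤ) * a ^ 2) k /
    (qp q q k * qp q (a * b) k * qp q (a * c) k * qp q (a * d) k) * q ^ k

lemma awDualTerm_eq_zero {q : ℂ} (hq : q ≠ 0) (a b c d : ℂ) {m n k : ℕ} (h : m < k ∨ n < k) :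
    awDualTerm q a b c d m n k = 0 := by
  rcases h with h | h <;>
    simp only [awDualTerm, qp_zpow_neg_natCast_of_lt hq h, mul_zero, zero_mul, zero_div]

lemma sum_range_awDualTerm {q : ℂ} (hq : q ≠ 0) (a b c d : ℂ) {m n N : ℕ} (hN : min m n ≤ N) :
    ∑ k ∈ range (N + 1), awDualTerm q a b c d m n k =
      ∑ k ∈ range (min m n + 1), awDualTerm q a b c d m n k := by
  refine (sum_subset (range_subset_range.mpr (by omega)) fun k hk hk' => ?_).symm
  simp only [mem_range] at hk hk'
  exact awDualTerm_eq_zero hq a b c d (by omega)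

lemma AW_inv_mul_zpow_neg {a : ℂ} (ha : a ≠ 0) (q b c d : ℂ) (m n : ℕ) :
    AW q a b c d (a⁻¹ * q ^ (-(m : ℤ))) n =
      ∑ k ∈ range (n + 1), awDualTerm q a b c d m n k := by
  have hz : a * (a⁻¹ * q ^ (-(m : ℤ))) = q ^ (-(m : ℤ)) := by field_simp
  have hz' : a * (a⁻¹ * q ^ (-(m : ℤ)))⁻¹ = q ^ (m : ℤ) * a ^ 2 := by
    rw [mul_inv, inv_inv, ← zpow_neg, neg_neg]; ring
  simp only [AW, awDualTerm, hz, hz']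

lemma awDualTerm_dual {q a b c d ta tb tc td : ℂ} (hq : q ≠ 0) (hta0 : ta ≠ 0)
    (hta : ta ^ 2 * q = a * b * c * d)
    (htb : ta * tb = a * b) (htc : ta * tc = a * c) (htd : ta * td = a * d) (m n k : ℕ) :
    awDualTerm q ta tb tc td n m k = awDualTerm q a b c d m n k := by
  have habcd : q ^ ((n : ℤ) - 1) * (a * b * c * d) = q ^ (n : ℤ) * ta ^ 2 := by
    rw [← hta, zpow_sub₀ hq, zpow_one]; field_simp
  -- `ã³b̃c̃d̃ = (ãb̃)(ãc̃)(ãd̃) = a² · abcd = a² ã² q`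
  have hprod : ta * tb * tc * td = q * a ^ 2 := by
    refine mul_left_cancel₀ (pow_ne_zero 2 hta0) ?_
    linear_combination ta ^ 2 * tc * td * htb + a * b * ta * td * htc + a ^ 2 * b * c * htd -
      a ^ 2 * hta
  have htabcd : q ^ ((m : ℤ) - 1) * (ta * tb * tc * td) = q ^ (m : ℤ) * a ^ 2 := by
    rw [hprod, zpow_sub₀ hq, zpow_one]; field_simp
  simp only [awDualTerm, habcd, htabcd]
  rw [htb, htc, htd]
  ring

theorem stmt3_general (q a b c d ta tb tc td : ℂ) (m n : ℕ)
    (hq : q ≠ 0) (ha : a ≠ 0)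
    (hta : ta ^ 2 = a * b * c * d / q) (hta0 : ta ≠ 0)
    (htb : tb = a * b / ta) (htc : tc = a * c / ta) (htd : td = a * d / ta) :
    AW q a b c d (a⁻¹ * q ^ (-(m : ℤ))) n =
        AW q ta tb tc td (ta⁻¹ * q ^ (-(n : ℤ))) m ∧
    AW q a b c d (a⁻¹ * q ^ (-(m : ℤ))) n =
      ∑ k ∈ Finset.range (min m n + 1),
        qp q (q ^ (-(n : ℤ))) k * qp q (q ^ ((n : ℤ) - 1) * (a * b * c * d)) k *
          qp q (q ^ (-(m : ℤ))) k * qp q (q ^ (m : ℤ) * a ^ 2) k /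
          (qp q q k * qp q (a * b) k * qp q (a * c) k * qp q (a * d) k) * q ^ k := by
  have hta' : ta ^ 2 * q = a * b * c * d := by rw [hta]; field_simp
  have hdual (k : ℕ) : awDualTerm q ta tb tc td n m k = awDualTerm q a b c d m n k :=
    awDualTerm_dual hq hta0 hta' (by rw [htb]; field_simp) (by rw [htc]; field_simp)
      (by rw [htd]; field_simp) m n k
  have hlhs : AW q a b c d (a⁻¹ * q ^ (-(m : ℤ))) n =
      ∑ k ∈ range (min m n + 1), awDualTerm q a b c d m n k := by
    rw [AW_inv_mul_zpow_neg ha, sum_range_awDualTerm hq a b c d (min_le_right m n)]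
  refine ⟨?_, hlhs⟩
  rw [hlhs, AW_inv_mul_zpow_neg hta0, sum_congr rfl fun k _ => hdual k,
    sum_range_awDualTerm hq a b c d (min_le_left m n)]

/-- Duality of Askey–Wilson polynomials at the points `a⁻¹ q^{-m}`, both sides
being given by the explicit terminating sum. -/
theorem stmt3 (q a b c d ta tb tc td : ℂ) (m n : ℕ)
    (hq : q ≠ 0) (ha : a ≠ 0) (habcd0 : a * b * c * d ≠ 0)
    (hta : ta ^ 2 = a * b * c * d / q) (hta0 : ta ≠ 0)
    (htb : tb = a * b / ta) (htc : tc = a * c / ta) (htd : td = a * d / ta)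
    (hab : ∀ j : ℕ, a * b ≠ q ^ (-(j : ℤ)))
    (hac : ∀ j : ℕ, a * c ≠ q ^ (-(j : ℤ)))
    (had : ∀ j : ℕ, a * d ≠ q ^ (-(j : ℤ)))
    (habcd : ∀ j : ℕ, a * b * c * d ≠ q ^ (-(j : ℤ)))
    (hroot : ∀ j : ℕ, 1 ≤ j → q ^ j ≠ 1) :
    AW q a b c d (a⁻¹ * q ^ (-(m : ℤ))) n =
        AW q ta tb tc td (ta⁻¹ * q ^ (-(n : ℤ))) m ∧
    AW q a b c d (a⁻¹ * q ^ (-(m : ℤ))) n =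
      ∑ k ∈ Finset.range (min m n + 1),
        qp q (q ^ (-(n : ℤ))) k * qp q (q ^ ((n : ℤ) - 1) * (a * b * c * d)) k *
          qp q (q ^ (-(m : ℤ))) k * qp q (q ^ (m : ℤ) * a ^ 2) k /
          (qp q q k * qp q (a * b) k * qp q (a * c) k * qp q (a * d) k) * q ^ k :=
  stmt3_general q a b c d ta tb tc td m n hq ha hta hta0 htb htc htd
end

section
/- The big q-Jacobi polynomials satisfy the symmetry P_n(x; a, b, c; q) = P_n(x; c, a b c^{-1}, a; q). -/
/-- Big q-Jacobi polynomial `P_n(x;a,b,c;q)` as a terminating ₃φ₂ sum. -/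
noncomputable def bigqJacobi (q a b c x : ℂ) (n : ℕ) : ℂ :=
  ∑ k ∈ Finset.range (n + 1),
    qp q (q ^ (-(n : ℤ))) k * qp q (q ^ ((n : ℤ) + 1) * (a * b)) k * qp q x k /
      (qp q q k * qp q (q * a) k * qp q (q * c) k) * q ^ k

theorem bigqJacobi_swap_of_mul_eq (q a b c b' x : ℂ) (n : ℕ) (h : a * b = c * b') :
    bigqJacobi q a b c x n = bigqJacobi q c b' a x n := by
  unfold bigqJacobi
  refine Finset.sum_congr rfl fun k _ => ?_
  rw [h, mul_right_comm (qp q q k)]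

theorem stmt6_general (q a b c x : ℂ) (n : ℕ)
    (hc : c ≠ 0) :
    bigqJacobi q a b c x n = bigqJacobi q c (a * b * c⁻¹) a x n :=
  bigqJacobi_swap_of_mul_eq q a b c _ x n (by field_simp)

/-- Symmetry `P_n(x;a,b,c;q) = P_n(x;c,abc⁻¹,a;q)` of big q-Jacobi polynomials. -/
theorem stmt6 (q a b c x : ℂ) (n : ℕ)
    (hq : q ≠ 0) (hroot : ∀ m : ℕ, 1 ≤ m → q ^ m ≠ 1) (hc : c ≠ 0)
    (hA : ∀ m : ℕ, 1 ≤ m → a ≠ q ^ (-(m : ℤ)))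
    (hC : ∀ m : ℕ, 1 ≤ m → c ≠ q ^ (-(m : ℤ)))
    (hAB : ∀ m : ℕ, 1 ≤ m → a * b ≠ q ^ (-(m : ℤ))) :
    bigqJacobi q a b c x n = bigqJacobi q c (a * b * c⁻¹) a x n :=
  stmt6_general q a b c x n hc
end

section
/- The symmetric big q-Jacobi polynomials satisfy P_n(-x; a, a, -a; q) = (-1)^n P_n(x; a, a, -a; q). -/
/-!
For `b = a`, `c = -a` the factors `(qa;q)_k (-qa;q)_k` combine to `(q²a²;q²)_k`, so `P_n` depends
on `a` only through `s = a²`. Expanding `x P_{N+1}` in the basis `(x;q)_k` with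
`x (x;q)_k = q^{-k} ((x;q)_k - (x;q)_{k+1})` and comparing coefficients gives the three-term
recurrence
  `(1 - q^{2N+3} s) x P_{N+1} = (1 - q^{N+2} s) P_{N+2} + q^{N+2} s (1 - q^{N+1}) P_N`
without a constant term. Together with `P_0 = 1` and `P_1 = x` it forces
`P_n(-x) = (-1)^n P_n(x)`.
-/

open Finset

theorem sum_range_mul_sub_succ {R : Type*} [CommRing R] (d e : ℕ → R) (M : ℕ) :
    ∑ k ∈ range M, d k * (e k - e (k + 1)) + d M * e M =
      d 0 * e 0 + ∑ k ∈ range M, (d (k + 1) - d k) * e (k + 1) := by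
  induction M with
  | zero => simp
  | succ M ih =>
    rw [sum_range_succ, sum_range_succ]
    linear_combination ih

theorem eq_neg_one_pow_mul_of_recurrence {R : Type*} [CommRing R] [IsDomain R]
    {P : ℕ → R → R} (α β γ : ℕ → R) (hβ : ∀ n, β n ≠ 0)
    (h0 : ∀ x, P 0 (-x) = P 0 x) (h1 : ∀ x, P 1 (-x) = -P 1 x)
    (hrec : ∀ n x, α n * (x * P (n + 1) x) = β n * P (n + 2) x + γ n * P n x)
    (n : ℕ) (x : R) : P n (-x) = (-1) ^ n * P n x := by
  induction n using Nat.twoStepInduction with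
  | zero => simpa using h0 x
  | one => simpa using h1 x
  | more n ih ih' =>
    apply mul_left_cancel₀ (hβ n)
    linear_combination -hrec n (-x) + (-1) ^ n * hrec n x - γ n * ih - α n * x * ih'

theorem qp_zero (q b : ℂ) : qp q b 0 = 1 := prod_range_zero _

theorem qp_succ (q b : ℂ) (k : ℕ) : qp q b (k + 1) = qp q b k * (1 - b * q ^ k) :=
  prod_range_succ _ _

theorem qp_succ' (q b : ℂ) (k : ℕ) : qp q b (k + 1) = (1 - b) * qp q (b * q) k := by
  rw [qp, prod_range_succ', pow_zero, mul_one, mul_comm, qp]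
  simp only [pow_succ', mul_assoc]

theorem one_sub_mul_qp_succ (q b : ℂ) (k : ℕ) :
    (1 - b) * qp q (b * q) (k + 1) = qp q b k * (1 - b * q ^ k) * (1 - b * q ^ (k + 1)) := by
  rw [← qp_succ', qp_succ, qp_succ]

theorem qp_mul_qp_neg (q b : ℂ) (k : ℕ) : qp q b k * qp q (-b) k = qp (q ^ 2) (b ^ 2) k := by
  simp only [qp, ← prod_mul_distrib]
  exact prod_congr rfl fun j _ => by ring

theorem qp_sub_qp_succ (q x : ℂ) (k : ℕ) : qp q x k - qp q x (k + 1) = x * q ^ k * qp q x k := by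
  rw [qp_succ]; ring

theorem qp_inv_pow_eq_zero {q : ℂ} (hq : q ≠ 0) {n k : ℕ} (h : n < k) : qp q (q ^ n)⁻¹ k = 0 :=
  prod_eq_zero (mem_range.2 h) (by rw [inv_mul_cancel₀ (pow_ne_zero n hq), sub_self])

noncomputable def symWeight (q s : ℂ) (k : ℕ) : ℂ := q ^ k / (qp q q k * qp (q ^ 2) (q ^ 2 * s) k)

noncomputable def symCoeff (q s : ℂ) (n k : ℕ) : ℂ :=
  qp q (q ^ n)⁻¹ k * qp q (q ^ (n + 1) * s) k * symWeight q s k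

noncomputable def symBigqJacobi (q s x : ℂ) (n : ℕ) : ℂ :=
  ∑ k ∈ range (n + 1), symCoeff q s n k * qp q x k

theorem bigqJacobi_symmetric (q a x : ℂ) (n : ℕ) :
    bigqJacobi q a a (-a) x n = symBigqJacobi q (a ^ 2) x n := by
  refine sum_congr rfl fun k _ => ?_
  have hprod : qp q (q * a) k * qp q (q * -a) k = qp (q ^ 2) (q ^ 2 * a ^ 2) k := by
    rw [mul_neg, qp_mul_qp_neg, mul_pow]
  rw [symCoeff, symWeight, zpow_neg, zpow_natCast, ← Nat.cast_succ, zpow_natCast, ← sq,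
    mul_assoc (qp q q k), hprod]
  ring

theorem symWeight_succ (q s : ℂ) (k : ℕ) :
    symWeight q s (k + 1) =
      symWeight q s k * (q / ((1 - q ^ (k + 1)) * (1 - q ^ (2 * k + 2) * s))) := by
  simp only [symWeight, qp_succ, div_eq_mul_inv, mul_inv]
  ring

theorem symCoeff_eq_zero {q : ℂ} (hq : q ≠ 0) (s : ℂ) {n k : ℕ} (h : n < k) :
    symCoeff q s n k = 0 := by
  rw [symCoeff, qp_inv_pow_eq_zero hq h, zero_mul, zero_mul]

theorem symBigqJacobi_eq_sum {q : ℂ} (hq : q ≠ 0) (s x : ℂ) {n M : ℕ} (h : n < M) :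
    symBigqJacobi q s x n = ∑ k ∈ range M, symCoeff q s n k * qp q x k := by
  refine sum_subset (range_subset_range.2 h) fun k hkM hkn => ?_
  rw [symCoeff_eq_zero hq s (by simpa using hkn), zero_mul]

theorem symCoeff_recurrence {q s : ℂ} (hq : q ≠ 0) {k : ℕ} (hk : q ^ (k + 1) ≠ 1)
    (hks : q ^ (2 * k + 2) * s ≠ 1) (N : ℕ) :
    (1 - q ^ (2 * N + 3) * s) * (symCoeff q s (N + 1) (k + 1) / q ^ (k + 1) -
        symCoeff q s (N + 1) k / q ^ k) =
      (1 - q ^ (N + 2) * s) * symCoeff q s (N + 2) (k + 1) +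
        q ^ (N + 2) * s * (1 - q ^ (N + 1)) * symCoeff q s N (k + 1) := by
  have hX2 : qp q (q ^ (N + 2))⁻¹ (k + 1) = (1 - (q ^ (N + 2))⁻¹) * qp q (q ^ (N + 1))⁻¹ k := by
    rw [qp_succ', pow_succ q (N + 1), mul_inv, inv_mul_cancel_right₀ hq]
  have hY0 : qp q (q ^ (N + 1) * s) (k + 1) =
      (1 - q ^ (N + 1) * s) * qp q (q ^ (N + 1 + 1) * s) k := by
    rw [qp_succ', pow_succ q (N + 1), mul_right_comm]
  have hY2 : (1 - q ^ (N + 2) * s) * qp q (q ^ (N + 2 + 1) * s) (k + 1) =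
      qp q (q ^ (N + 1 + 1) * s) k * (1 - q ^ (N + 2) * s * q ^ k) *
        (1 - q ^ (N + 2) * s * q ^ (k + 1)) := by
    rw [pow_succ q (N + 2), mul_right_comm]
    exact one_sub_mul_qp_succ ..
  have hX0 : (1 - (q ^ (N + 1))⁻¹) * qp q (q ^ N)⁻¹ (k + 1) =
      qp q (q ^ (N + 1))⁻¹ k * (1 - (q ^ (N + 1))⁻¹ * q ^ k) *
        (1 - (q ^ (N + 1))⁻¹ * q ^ (k + 1)) := by
    have h : (q ^ (N + 1))⁻¹ * q = (q ^ N)⁻¹ := by rw [pow_succ, mul_inv, inv_mul_cancel_right₀ hq]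
    rw [← h]
    exact one_sub_mul_qp_succ ..
  have hw : symWeight q s (k + 1) * ((1 - q ^ (k + 1)) * (1 - q ^ (2 * k + 2) * s)) =
      q * symWeight q s k := by
    rw [symWeight_succ, mul_assoc, div_mul_cancel₀ _ (mul_ne_zero (sub_ne_zero.2 (Ne.symm hk))
      (sub_ne_zero.2 (Ne.symm hks))), mul_comm]
  simp only [symCoeff, qp_succ q (q ^ (N + 1))⁻¹ k, qp_succ q (q ^ (N + 1 + 1) * s) k, hX2, hY0]
  -- After `hY2`, `hX0` and `hw`, every term is `(q^{-N-1};q)_k (q^{N+2}s;q)_k` times the weight at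
  -- `k + 1` times a Laurent polynomial in `q`, `s`, `q^N`, `q^k`.
  linear_combination (norm := skip)
    -(1 - (q ^ (N + 2))⁻¹) * qp q (q ^ (N + 1))⁻¹ k * symWeight q s (k + 1) * hY2 +
    q ^ (N + 1) * q ^ (N + 2) * s * (1 - q ^ (N + 1) * s) * qp q (q ^ (N + 1 + 1) * s) k *
      symWeight q s (k + 1) * hX0 +
    (1 - q ^ (2 * N + 3) * s) * qp q (q ^ (N + 1))⁻¹ k * qp q (q ^ (N + 1 + 1) * s) k /
      q ^ (k + 1) * hw
  field_simp
  ring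

theorem symCoeff_zero (q s : ℂ) (n : ℕ) : symCoeff q s n 0 = 1 := by
  simp [symCoeff, symWeight, qp_zero]

theorem symBigqJacobi_recurrence {q s : ℂ} (hq : q ≠ 0) (hq1 : ∀ m : ℕ, 1 ≤ m → q ^ m ≠ 1)
    (hs : ∀ m : ℕ, 1 ≤ m → q ^ m * s ≠ 1) (N : ℕ) (x : ℂ) :
    (1 - q ^ (2 * N + 3) * s) * (x * symBigqJacobi q s x (N + 1)) =
      (1 - q ^ (N + 2) * s) * symBigqJacobi q s x (N + 2) +
        q ^ (N + 2) * s * (1 - q ^ (N + 1)) * symBigqJacobi q s x N := by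
  set A := 1 - q ^ (2 * N + 3) * s
  set B := 1 - q ^ (N + 2) * s
  set D := q ^ (N + 2) * s * (1 - q ^ (N + 1))
  set d : ℕ → ℂ := fun k => A * (symCoeff q s (N + 1) k / q ^ k)
  have hlhs : A * (x * symBigqJacobi q s x (N + 1)) =
      ∑ k ∈ range (N + 2), d k * (qp q x k - qp q x (k + 1)) + d (N + 2) * qp q x (N + 2) := by
    simp only [d, symCoeff_eq_zero hq s (by omega : N + 1 < N + 2), symBigqJacobi, mul_sum,
      qp_sub_qp_succ, zero_div, mul_zero, zero_mul, add_zero]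
    refine sum_congr rfl fun k _ => ?_
    field_simp
  have hrhs : B * symBigqJacobi q s x (N + 2) + D * symBigqJacobi q s x N =
      A + ∑ k ∈ range (N + 2),
        (B * symCoeff q s (N + 2) (k + 1) + D * symCoeff q s N (k + 1)) * qp q x (k + 1) := by
    rw [symBigqJacobi, symBigqJacobi_eq_sum hq s x (by omega : N < N + 2 + 1), mul_sum, mul_sum,
      ← sum_add_distrib, sum_range_succ', add_comm]
    simp only [symCoeff_zero, qp_zero]
    congr 1
    · ring
    · exact sum_congr rfl fun k _ => by ring
  rw [hlhs, sum_range_mul_sub_succ, hrhs]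
  simp only [d, symCoeff_zero, qp_zero, pow_zero, div_one, mul_one]
  refine congrArg _ (sum_congr rfl fun k _ => ?_)
  rw [← mul_sub, symCoeff_recurrence hq (hq1 (k + 1) (by omega))
    (hs (2 * k + 2) (by omega))]

theorem symBigqJacobi_zero (q s x : ℂ) : symBigqJacobi q s x 0 = 1 := by
  rw [symBigqJacobi, sum_range_one, symCoeff_zero, qp_zero, mul_one]

theorem symBigqJacobi_one {q s : ℂ} (hq : q ≠ 0) (hq1 : q ≠ 1) (hs : q ^ 2 * s ≠ 1) (x : ℂ) :
    symBigqJacobi q s x 1 = x := by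
  have h1 : 1 - q ≠ 0 := sub_ne_zero.2 (Ne.symm hq1)
  have h2 : 1 - q ^ 2 * s ≠ 0 := sub_ne_zero.2 (Ne.symm hs)
  simp only [symBigqJacobi, sum_range_succ, sum_range_zero, symCoeff, symWeight, qp_succ, qp_zero]
  field_simp
  ring

theorem stmt8_general (q a x : ℂ) (n : ℕ)
    (hq : q ≠ 0) (hroot : ∀ m : ℕ, 1 ≤ m → q ^ m ≠ 1)
    (hA2 : ∀ m : ℕ, 1 ≤ m → a ^ 2 ≠ q ^ (-(m : ℤ))) :
    bigqJacobi q a a (-a) (-x) n = (-1) ^ n * bigqJacobi q a a (-a) x n := by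
  have hs : ∀ m : ℕ, 1 ≤ m → q ^ m * a ^ 2 ≠ 1 := fun m hm h =>
    hA2 m hm (by rw [zpow_neg, zpow_natCast]; exact eq_inv_of_mul_eq_one_right h)
  simp only [bigqJacobi_symmetric]
  refine eq_neg_one_pow_mul_of_recurrence (P := fun n x => symBigqJacobi q (a ^ 2) x n)
    (fun N => 1 - q ^ (2 * N + 3) * a ^ 2) (fun N => 1 - q ^ (N + 2) * a ^ 2)
    (fun N => q ^ (N + 2) * a ^ 2 * (1 - q ^ (N + 1)))
    (fun N => sub_ne_zero.2 (hs (N + 2) (by omega)).symm) (fun x => ?_) (fun x => ?_)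
    (symBigqJacobi_recurrence hq hroot hs) n x
  · rw [symBigqJacobi_zero, symBigqJacobi_zero]
  · have hq1 : q ≠ 1 := by simpa using hroot 1 le_rfl
    rw [symBigqJacobi_one hq hq1 (hs 2 (by omega)), symBigqJacobi_one hq hq1 (hs 2 (by omega))]

/-- Symmetry of the symmetric big q-Jacobi polynomials:
`P_n(-x;a,a,-a;q) = (-1)^n P_n(x;a,a,-a;q)`. -/
theorem stmt8 (q a x : ℂ) (n : ℕ)
    (hq : q ≠ 0) (hroot : ∀ m : ℕ, 1 ≤ m → q ^ m ≠ 1) (ha : a ≠ 0)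
    (hA : ∀ m : ℕ, 1 ≤ m → a ≠ q ^ (-(m : ℤ)))
    (hA' : ∀ m : ℕ, 1 ≤ m → -a ≠ q ^ (-(m : ℤ)))
    (hA2 : ∀ m : ℕ, 1 ≤ m → a ^ 2 ≠ q ^ (-(m : ℤ))) :
    bigqJacobi q a a (-a) (-x) n = (-1) ^ n * bigqJacobi q a a (-a) x n :=
  stmt8_general q a x n hq hroot hA2
end

section
/- Verde-Star eigenvalue property: let (x_j), (h_j), (g_j) be scalar sequences with h_0 = 0 and h_n ≠ h_j for 0 ≤ j < n, define Newton polynomials v_k(x) = ∏_{j=0}^{k-1}(x - x_j), coefficients c_{n,k} = ∏_{j=k}^{n-1} g_{j+1}/(h_n - h_j), and u_n(x) = Σ_{k=0}^n c_{n,k} v_k(x). If L is the linear operator on polynomials determined by L v_0 = 0 and L v_n = h_n v_n + g_n v_{n-1} for n > 0, then L u_n = h_n u_n. -/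
open Polynomial

/-- Verde-Star eigenvalue property: if `L` acts on the Newton basis
`v_k(x) = ∏_{j<k}(x - x_j)` by `L v_0 = 0`, `L v_n = h_n v_n + g_n v_{n-1}`
(with the normalization `h_0 = 0`), then the polynomials
`u_n = Σ_{k≤n} (∏_{j=k}^{n-1} g_{j+1}/(h_n - h_j)) v_k` satisfy `L u_n = h_n u_n`. -/
theorem stmt12 (F : Type*) [Field F] (x h g : ℕ → F)
    (hsep : ∀ n, ∀ j < n, h n ≠ h j) (h0 : h 0 = 0)
    (L : Polynomial F →ₗ[F] Polynomial F)
    (v : ℕ → Polynomial F)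
    (hv : ∀ k, v k = ∏ j ∈ Finset.range k, (X - C (x j)))
    (hL0 : L (v 0) = 0)
    (hLn : ∀ n, 0 < n → L (v n) = C (h n) * v n + C (g n) * v (n - 1)) :
    ∀ n, L (∑ k ∈ Finset.range (n + 1),
            C (∏ j ∈ Finset.Ico k n, g (j + 1) / (h n - h j)) * v k)
        = C (h n) * ∑ k ∈ Finset.range (n + 1),
            C (∏ j ∈ Finset.Ico k n, g (j + 1) / (h n - h j)) * v k := by
  intro n
  set c : ℕ → F := fun k => ∏ j ∈ Finset.Ico k n, g (j + 1) / (h n - h j) with hc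
  have hne : ∀ k < n, h n - h k ≠ 0 := fun k hk => sub_ne_zero.mpr (hsep n k hk)
  have key : ∀ k < n, c (k + 1) * g (k + 1) = c k * (h n - h k) := by
    intro k hk
    have hsplit : c k = (g (k + 1) / (h n - h k)) * c (k + 1) :=
      Finset.prod_eq_prod_Ico_succ_bot hk _
    rw [hsplit]
    field_simp [hne k hk]
  have lhs_eq : ∀ k, L (C (c k) * v k) = C (c k * h k) * v k +
      (if k = 0 then 0 else C (c k * g k) * v (k - 1)) := by
    intro k
    rw [← smul_eq_C_mul, map_smul]
    rcases Nat.eq_zero_or_pos k with rfl | hk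
    · simp [hL0, h0]
    · rw [hLn k hk, if_neg hk.ne']
      simp only [smul_add, smul_eq_C_mul, C_mul]
      ring
  rw [map_sum]
  rw [Finset.sum_congr rfl (fun k _ => lhs_eq k)]
  rw [Finset.sum_add_distrib]
  rw [Finset.sum_range_succ' (fun k => if k = 0 then 0 else C (c k * g k) * v (k - 1)) n]
  simp only [Nat.succ_ne_zero, if_false, if_true, reduceIte, Nat.add_sub_cancel, add_zero]
  rw [Finset.sum_range_succ (fun k => C (c k * h k) * v k) n]
  rw [Finset.mul_sum, Finset.sum_range_succ (fun k => C (h n) * (C (c k) * v k)) n]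
  have final : ∀ k ∈ Finset.range n,
      C (c k * h k) * v k + C (c (k + 1) * g (k + 1)) * v k
        = C (h n) * (C (c k) * v k) := by
    intro k hk
    rw [Finset.mem_range] at hk
    rw [key k hk]
    simp only [C_mul, C_sub]
    ring
  rw [add_right_comm, ← Finset.sum_add_distrib, Finset.sum_congr rfl final]
  simp only [C_mul]
  ring
end

section
/- Verde-Star duality evaluation: with u_n, v_k, c_{n,k} as in the Verde-Star setup and the dual objects ṽ_k(y) = ∏_{j=0}^{k-1}(y - h_j), c̃_{m,k} = ∏_{j=k}^{m-1} g_{j+1}/(x_m - x_j), ũ_m(y) = Σ_k c̃_{m,k} ṽ_k(y), define U_n(x) = [∏_{j=0}^{n-1}(h_n - h_j)/g_{j+1}] u_n(x) and Ũ_m(y) = [∏_{j=0}^{m-1}(x_m - x_j)/g_{j+1}] ũ_m(y). Then U_n(x_m) = Ũ_m(h_n) for all m, n ≥ 0, both being equal to Σ_{k} ∏_{j=0}^{k-1} (h_n - h_j)(x_m - x_j)/g_{j+1}. -/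
variable {F : Type*} [Field F]

/-- Verde-Star polynomial `u_n` evaluated at `t`:
`u_n(t) = Σ_{k≤n} (∏_{j=k}^{n-1} g_{j+1}/(h_n - h_j)) ∏_{j<k}(t - x_j)`. -/
noncomputable def vsU (x h g : ℕ → F) (n : ℕ) (t : F) : F :=
  ∑ k ∈ Finset.range (n + 1),
    (∏ j ∈ Finset.Ico k n, g (j + 1) / (h n - h j)) * ∏ j ∈ Finset.range k, (t - x j)

/-- The normalized Verde-Star polynomial
`U_n(t) = (∏_{j<n} (h_n - h_j)/g_{j+1}) · u_n(t)`. -/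
noncomputable def vsUcap (x h g : ℕ → F) (n : ℕ) (t : F) : F :=
  (∏ j ∈ Finset.range n, (h n - h j) / g (j + 1)) * vsU x h g n t

/-! Multiplying `u_n` by the normalizing factor cancels the tail product
`∏_{j=k}^{n-1} g_{j+1}/(h_n - h_j)`, so the `k`-th term of `U_n(t)` becomes
`∏_{j<k} (h_n - h_j)(t - x_j)/g_{j+1}`. At `t = x_m` every term with `k > m` vanishes, and the
surviving sum is symmetric under exchanging `(x, m)` with `(h, n)`. -/

open Finset

lemma Finset.prod_range_mul_prod_Ico_inv {M : Type*} [CommGroupWithZero M] (f : ℕ → M)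
    {k n : ℕ} (hkn : k ≤ n) (hf : ∀ j ∈ Ico k n, f j ≠ 0) :
    (∏ j ∈ range n, f j) * ∏ j ∈ Ico k n, (f j)⁻¹ = ∏ j ∈ range k, f j := by
  rw [← prod_range_mul_prod_Ico f hkn, mul_assoc, ← prod_mul_distrib,
    prod_eq_one fun j hj => mul_inv_cancel₀ (hf j hj), mul_one]

lemma Finset.sum_range_prod_range_eq_of_eq_zero {R : Type*} [CommSemiring R] (f : ℕ → R)
    {m : ℕ} (hm : f m = 0) (n : ℕ) :
    ∑ k ∈ range (n + 1), ∏ j ∈ range k, f j =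
      ∑ k ∈ range (min m n + 1), ∏ j ∈ range k, f j := by
  refine (sum_subset (range_subset_range.mpr (by omega)) fun k hk hk' => ?_).symm
  rw [mem_range] at hk hk'
  exact prod_eq_zero (mem_range.mpr (by omega)) hm

lemma vsUcap_eq_sum (x h g : ℕ → F) (n : ℕ) (t : F)
    (hsep : ∀ j < n, h n ≠ h j) (hg : ∀ j, g (j + 1) ≠ 0) :
    vsUcap x h g n t =
      ∑ k ∈ range (n + 1), ∏ j ∈ range k, (h n - h j) * (t - x j) / g (j + 1) := by
  rw [vsUcap, vsU, mul_sum]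
  refine sum_congr rfl fun k hk => ?_
  have hkn : k ≤ n := Nat.lt_succ_iff.mp (mem_range.mp hk)
  have hcancel := prod_range_mul_prod_Ico_inv (fun j => (h n - h j) / g (j + 1)) hkn
    fun j hj => div_ne_zero (sub_ne_zero.mpr (hsep j (mem_Ico.mp hj).2)) (hg j)
  simp only [inv_div] at hcancel
  rw [← mul_assoc, hcancel, ← prod_mul_distrib]
  exact prod_congr rfl fun j _ => by ring

lemma vsUcap_apply_node (x h g : ℕ → F) (m n : ℕ)
    (hsep : ∀ j < n, h n ≠ h j) (hg : ∀ j, g (j + 1) ≠ 0) :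
    vsUcap x h g n (x m) =
      ∑ k ∈ range (min m n + 1), ∏ j ∈ range k, (h n - h j) * (x m - x j) / g (j + 1) := by
  rw [vsUcap_eq_sum x h g n (x m) hsep hg]
  exact sum_range_prod_range_eq_of_eq_zero _ (by simp) n

/-- Verde-Star duality evaluation: `U_n(x_m) = Ũ_m(h_n)`, where the dual data
is obtained by exchanging the roles of the sequences `x` and `h`; both sides
equal the symmetric sum `Σ_k ∏_{j<k} (h_n - h_j)(x_m - x_j)/g_{j+1}`. -/
theorem stmt13 (x h g : ℕ → F) (m n : ℕ)
    (hsep : ∀ j < n, h n ≠ h j) (xsep : ∀ j < m, x m ≠ x j)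
    (hg : ∀ j, g (j + 1) ≠ 0) :
    vsUcap x h g n (x m) = vsUcap h x g m (h n) ∧
    vsUcap x h g n (x m) =
      ∑ k ∈ Finset.range (min m n + 1),
        ∏ j ∈ Finset.range k, (h n - h j) * (x m - x j) / g (j + 1) := by
  have hU := vsUcap_apply_node x h g m n hsep hg
  have hdual := vsUcap_apply_node h x g n m xsep hg
  refine ⟨?_, hU⟩
  rw [hU, hdual, min_comm]
  exact sum_congr rfl fun k _ => prod_congr rfl fun j _ => by ring
end

section
/- Zhedanov relations for the Verde-Star operator pair: let K_1, K_2 act on sequences f = (f_n) by (K_1 f)_n = h_n f_n + g_{n+1} f_{n+1} and (K_2 f)_n = x_n f_n + f_{n-1} (with f_{-1}=0), where x_k = b_1 q^k + b_2 q^{-k}, h_k = a_1 q^k + a_2 q^{-k}, g_k = d_3 q^{2k} + d_1 q^k + d_0 + d_2 q^{-k} + d_4 q^{-2k} with d_0+d_1+d_2+d_3+d_4 = 0, d_3 = q^{-1} a_1 b_1, d_4 = q a_2 b_2. Then (q+q^{-1}) K_2 K_1 K_2 − K_2² K_1 − K_1 K_2² = C_1 K_1 + D K_2 + G_1, where C_1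 = (q−q^{-1})² b_1 b_2, D = −(q^{1/2}−q^{-1/2})²((q^{-1/2}a_1 − q^{1/2}a_2)(q^{-1/2}b_1 − q^{1/2}b_2) + d_1 + d_2), and G_1 = (q^{1/2}−q^{-1/2})(q−q^{-1})(q^{-1/2}b_1 d_2 + q^{1/2}b_2 d_1). -/
/-!
Extend sequences by zero to `ℤ`. Then `K₂` becomes `f ↦ x_n f_n + f_{n-1}` on all of `ℤ`, and so
does `K₁`, because its only boundary term `g₀ f₀` at index `-1` vanishes: `g₀ = Σ dᵢ = 0`.
On `ℤ`-indexed sequences both sides of the relation are combinations of `f_{n+1}, …, f_{n-2}`, so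
it reduces to four identities between the coefficients, which are Laurent polynomials in `q^n`.
Two are structural: `x` and `h` solve `y_{n-1} + y_{n+1} = (q + q⁻¹) y_n`, which kills the
coefficient of `f_{n-2}` and makes `(q + q⁻¹) x_n x_{n+1} - x_n² - x_{n+1}²` constant; the other two
are direct computations.
-/

variable {F : Type*} [Field F]

/-- The operator `K₁`: `(K₁ f)_n = h_n f_n + g_{n+1} f_{n+1}`. -/
def K1 (h g : ℕ → F) (f : ℕ → F) : ℕ → F := fun n => h n * f n + g (n + 1) * f (n + 1)

/-- The operator `K₂`: `(K₂ f)_n = x_n f_n + f_{n-1}` (with `f_{-1} = 0`). -/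
def K2 (x : ℕ → F) (f : ℕ → F) : ℕ → F :=
  fun n => x n * f n + if n = 0 then 0 else f (n - 1)

def K1Int (H G : ℤ → F) (f : ℤ → F) : ℤ → F := fun n => H n * f n + G (n + 1) * f (n + 1)

def K2Int (X : ℤ → F) (f : ℤ → F) : ℤ → F := fun n => X n * f n + f (n - 1)

def zeroExtend (f : ℕ → F) : ℤ → F
  | (n : ℕ) => f n
  | Int.negSucc _ => 0

@[simp] theorem zeroExtend_natCast (f : ℕ → F) (n : ℕ) : zeroExtend f n = f n := rfl

theorem zeroExtend_of_neg (f : ℕ → F) {n : ℤ} (hn : n < 0) : zeroExtend f n = 0 := by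
  cases n with
  | ofNat n => exact absurd hn (Int.natCast_nonneg n).not_gt
  | negSucc n => rfl

theorem zeroExtend_natCast_sub_one (f : ℕ → F) (n : ℕ) :
    zeroExtend f (n - 1) = if n = 0 then 0 else f (n - 1) := by
  rcases n with _ | n
  · exact zeroExtend_of_neg f (by norm_num)
  · simp

theorem zeroExtend_K2 {x : ℕ → F} {X : ℤ → F} (hX : ∀ n : ℕ, x n = X n) (f : ℕ → F) :
    zeroExtend (K2 x f) = K2Int X (zeroExtend f) := by
  funext n
  cases n with
  | ofNat n => simp only [Int.ofNat_eq_natCast, K2, K2Int, zeroExtend_natCast,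
      zeroExtend_natCast_sub_one, hX]
  | negSucc n => simp [K2Int, zeroExtend_of_neg, Int.negSucc_lt_zero]

theorem zeroExtend_K1 {h g : ℕ → F} {H G : ℤ → F} (hH : ∀ n : ℕ, h n = H n)
    (hG : ∀ n : ℕ, g n = G n) (hG₀ : G 0 = 0) (f : ℕ → F) :
    zeroExtend (K1 h g f) = K1Int H G (zeroExtend f) := by
  funext n
  rcases n with n | _ | n
  · simp only [Int.ofNat_eq_natCast, K1Int, ← Nat.cast_succ, zeroExtend_natCast, K1, hH, hG]
  · simp [K1Int, hG₀, zeroExtend_of_neg]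
  · have : Int.negSucc (n + 1) + 1 < 0 := by omega
    simp [K1Int, zeroExtend_of_neg, this, Int.negSucc_lt_zero]

/-- The hypotheses compare the coefficients of `f (n + 1)`, `f (n - 2)`, `f (n - 1)` and `f n`. -/
theorem zhedanov_int_of_coeff (X H G : ℤ → F) (β C D E : F)
    (h_succ : ∀ n, β * X n * X (n + 1) - X n ^ 2 - X (n + 1) ^ 2 = C)
    (h_sub_two : ∀ n, β * H n - H (n - 1) - H (n + 1) = 0)
    (h_sub_one : ∀ n, β * (X n * H n + H (n - 1) * X (n - 1) + G n)
      - (X n * H (n - 1) + X (n - 1) * H (n - 1) + G (n - 1))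
      - (H n * X n + H n * X (n - 1) + G (n + 1)) = D)
    (h_self : ∀ n, β * (X n ^ 2 * H n + X n * G (n + 1) + X n * G n)
      - (X n ^ 2 * H n + X n * G n + X (n - 1) * G n)
      - (H n * X n ^ 2 + G (n + 1) * (X (n + 1) + X n)) = C * H n + D * X n + E)
    (f : ℤ → F) (n : ℤ) :
    β * K2Int X (K1Int H G (K2Int X f)) n - K2Int X (K2Int X (K1Int H G f)) n
        - K1Int H G (K2Int X (K2Int X f)) n
      = C * K1Int H G f n + D * K2Int X f n + E * f n := by
  have h_sub_two' := h_sub_two (n - 1)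
  rw [sub_add_cancel] at h_sub_two'
  simp only [K1Int, K2Int, sub_add_cancel, add_sub_cancel_right]
  linear_combination G (n + 1) * f (n + 1) * h_succ n + f (n - 1 - 1) * h_sub_two'
    + f (n - 1) * h_sub_one n + f n * h_self n

def qSeq (q c₁ c₂ : F) (n : ℤ) : F := c₁ * q ^ n + c₂ * q ^ (-n)

def verdeStarG (q d₀ d₁ d₂ d₃ d₄ : F) (n : ℤ) : F :=
  d₃ * q ^ (2 * n) + d₁ * q ^ n + d₀ + d₂ * q ^ (-n) + d₄ * q ^ (-(2 * n))

variable {q : F}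

theorem qSeq_linear_recurrence (hq : q ≠ 0) (c₁ c₂ : F) (n : ℤ) :
    (q + q⁻¹) * qSeq q c₁ c₂ n - qSeq q c₁ c₂ (n - 1) - qSeq q c₁ c₂ (n + 1) = 0 := by
  have hqn : q ^ n ≠ 0 := zpow_ne_zero n hq
  simp only [qSeq, zpow_add_one₀ hq, zpow_sub_one₀ hq, zpow_neg, mul_inv, inv_inv]
  field_simp
  ring

theorem qSeq_quadratic_invariant (hq : q ≠ 0) (c₁ c₂ : F) (n : ℤ) :
    (q + q⁻¹) * qSeq q c₁ c₂ n * qSeq q c₁ c₂ (n + 1) - qSeq q c₁ c₂ n ^ 2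
      - qSeq q c₁ c₂ (n + 1) ^ 2 = (q - q⁻¹) ^ 2 * c₁ * c₂ := by
  have hqn : q ^ n ≠ 0 := zpow_ne_zero n hq
  simp only [qSeq, zpow_add_one₀ hq, zpow_neg, mul_inv]
  field_simp
  ring

theorem verdeStarG_eq (q d₀ d₁ d₂ d₃ d₄ : F) (n : ℤ) :
    verdeStarG q d₀ d₁ d₂ d₃ d₄ n
      = d₃ * (q ^ n) ^ 2 + d₁ * q ^ n + d₀ + d₂ * (q ^ n)⁻¹ + d₄ * ((q ^ n)⁻¹) ^ 2 := by
  simp only [verdeStarG, zpow_neg, zpow_mul', zpow_ofNat, inv_pow]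

section VerdeStar

variable (hq : q ≠ 0) {a₁ a₂ b₁ b₂ d₀ d₁ d₂ : F}
  (hsum : d₀ + d₁ + d₂ + q⁻¹ * a₁ * b₁ + q * a₂ * b₂ = 0)
include hq hsum

theorem verdeStar_coeff_sub_one (n : ℤ) :
    let X := qSeq q b₁ b₂; let H := qSeq q a₁ a₂
    let G := verdeStarG q d₀ d₁ d₂ (q⁻¹ * a₁ * b₁) (q * a₂ * b₂)
    (q + q⁻¹) * (X n * H n + H (n - 1) * X (n - 1) + G n)
      - (X n * H (n - 1) + X (n - 1) * H (n - 1) + G (n - 1))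
      - (H n * X n + H n * X (n - 1) + G (n + 1))
      = -(q + q⁻¹ - 2) * (q⁻¹ * a₁ * b₁ - a₁ * b₂ - a₂ * b₁ + q * a₂ * b₂ + d₁ + d₂) := by
  intro X H G
  have hqn : q ^ n ≠ 0 := zpow_ne_zero n hq
  obtain rfl : d₀ = -(d₁ + d₂ + q⁻¹ * a₁ * b₁ + q * a₂ * b₂) := by linear_combination hsum
  simp only [X, H, G, qSeq, verdeStarG_eq, zpow_add_one₀ hq, zpow_sub_one₀ hq, zpow_neg, mul_inv,
    inv_inv]
  field_simp
  ring

theorem verdeStar_coeff_self (n : ℤ) :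
    let X := qSeq q b₁ b₂; let H := qSeq q a₁ a₂
    let G := verdeStarG q d₀ d₁ d₂ (q⁻¹ * a₁ * b₁) (q * a₂ * b₂)
    (q + q⁻¹) * (X n ^ 2 * H n + X n * G (n + 1) + X n * G n)
      - (X n ^ 2 * H n + X n * G n + X (n - 1) * G n)
      - (H n * X n ^ 2 + G (n + 1) * (X (n + 1) + X n))
      = (q - q⁻¹) ^ 2 * b₁ * b₂ * H n
        + -(q + q⁻¹ - 2) * (q⁻¹ * a₁ * b₁ - a₁ * b₂ - a₂ * b₁ + q * a₂ * b₂ + d₁ + d₂) * X n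
        + (q - q⁻¹) * ((1 - q⁻¹) * b₁ * d₂ + (q - 1) * b₂ * d₁) := by
  intro X H G
  have hqn : q ^ n ≠ 0 := zpow_ne_zero n hq
  obtain rfl : d₀ = -(d₁ + d₂ + q⁻¹ * a₁ * b₁ + q * a₂ * b₂) := by linear_combination hsum
  simp only [X, H, G, qSeq, verdeStarG_eq, zpow_add_one₀ hq, zpow_sub_one₀ hq, zpow_neg, mul_inv,
    inv_inv]
  field_simp
  ring

end VerdeStar

theorem stmt14_general (q s a1 a2 b1 b2 d0 d1 d2 d3 d4 : F)
    (hs : s ^ 2 = q) (hs0 : s ≠ 0)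
    (hsum : d0 + d1 + d2 + d3 + d4 = 0)
    (hd3 : d3 = q⁻¹ * a1 * b1) (hd4 : d4 = q * a2 * b2)
    (x h g : ℕ → F)
    (hx : ∀ k, x k = b1 * q ^ k + b2 * q ^ (-(k : ℤ)))
    (hh : ∀ k, h k = a1 * q ^ k + a2 * q ^ (-(k : ℤ)))
    (hg : ∀ k, g k = d3 * q ^ (2 * k) + d1 * q ^ k + d0 +
        d2 * q ^ (-(k : ℤ)) + d4 * q ^ (-(2 * k : ℤ))) :
    ∀ (f : ℕ → F) (n : ℕ),
      (q + q⁻¹) * K2 x (K1 h g (K2 x f)) n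
          - K2 x (K2 x (K1 h g f)) n - K1 h g (K2 x (K2 x f)) n
        = (q - q⁻¹) ^ 2 * b1 * b2 * K1 h g f n
          + (-(s - s⁻¹) ^ 2 * ((s⁻¹ * a1 - s * a2) * (s⁻¹ * b1 - s * b2) + d1 + d2))
              * K2 x f n
          + (s - s⁻¹) * (q - q⁻¹) * (s⁻¹ * b1 * d2 + s * b2 * d1) * f n := by
  intro f n
  subst hd3 hd4
  have hq : q ≠ 0 := hs ▸ pow_ne_zero 2 hs0
  have hD : -(s - s⁻¹) ^ 2 * ((s⁻¹ * a1 - s * a2) * (s⁻¹ * b1 - s * b2) + d1 + d2)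
      = -(q + q⁻¹ - 2) * (q⁻¹ * a1 * b1 - a1 * b2 - a2 * b1 + q * a2 * b2 + d1 + d2) := by
    subst hs; field_simp; ring
  have hE : (s - s⁻¹) * (q - q⁻¹) * (s⁻¹ * b1 * d2 + s * b2 * d1)
      = (q - q⁻¹) * ((1 - q⁻¹) * b1 * d2 + (q - 1) * b2 * d1) := by
    subst hs; field_simp
  have hX : ∀ k : ℕ, x k = qSeq q b1 b2 k := fun k => by simp [hx, qSeq]
  have hH : ∀ k : ℕ, h k = qSeq q a1 a2 k := fun k => by simp [hh, qSeq]
  have hG : ∀ k : ℕ, g k = verdeStarG q d0 d1 d2 (q⁻¹ * a1 * b1) (q * a2 * b2) k :=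
    fun k => by rw [hg, verdeStarG, ← zpow_natCast, ← zpow_natCast]; push_cast; ring
  have hG₀ : verdeStarG q d0 d1 d2 (q⁻¹ * a1 * b1) (q * a2 * b2) 0 = 0 := by
    simp only [verdeStarG, mul_zero, neg_zero, zpow_zero, mul_one]
    linear_combination hsum
  have key := zhedanov_int_of_coeff _ _ _ (q + q⁻¹) _ _ _ (qSeq_quadratic_invariant hq b1 b2)
    (qSeq_linear_recurrence hq a1 a2) (verdeStar_coeff_sub_one hq hsum) (verdeStar_coeff_self hq hsum)
    (zeroExtend f) n
  simp only [← zeroExtend_K2 hX, ← zeroExtend_K1 hH hG hG₀, zeroExtend_natCast] at key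
  rw [hD, hE]
  exact key

/-- First Zhedanov relation
`(q+q⁻¹) K₂K₁K₂ − K₂²K₁ − K₁K₂² = C₁K₁ + DK₂ + G₁`
for the Verde-Star operator pair, with
`x_k = b₁q^k + b₂q^{-k}`, `h_k = a₁q^k + a₂q^{-k}`,
`g_k = d₃q^{2k} + d₁q^k + d₀ + d₂q^{-k} + d₄q^{-2k}`,
`Σdᵢ = 0`, `d₃ = q⁻¹a₁b₁`, `d₄ = qa₂b₂`, and `s` a square root of `q`. -/
theorem stmt14 (q s a1 a2 b1 b2 d0 d1 d2 d3 d4 : F)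
    (hq : q ≠ 0) (hq2 : q ^ 2 ≠ 1) (hs : s ^ 2 = q) (hs0 : s ≠ 0)
    (hsum : d0 + d1 + d2 + d3 + d4 = 0)
    (hd3 : d3 = q⁻¹ * a1 * b1) (hd4 : d4 = q * a2 * b2)
    (x h g : ℕ → F)
    (hx : ∀ k, x k = b1 * q ^ k + b2 * q ^ (-(k : ℤ)))
    (hh : ∀ k, h k = a1 * q ^ k + a2 * q ^ (-(k : ℤ)))
    (hg : ∀ k, g k = d3 * q ^ (2 * k) + d1 * q ^ k + d0 +
        d2 * q ^ (-(k : ℤ)) + d4 * q ^ (-(2 * k : ℤ))) :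
    ∀ (f : ℕ → F) (n : ℕ),
      (q + q⁻¹) * K2 x (K1 h g (K2 x f)) n
          - K2 x (K2 x (K1 h g f)) n - K1 h g (K2 x (K2 x f)) n
        = (q - q⁻¹) ^ 2 * b1 * b2 * K1 h g f n
          + (-(s - s⁻¹) ^ 2 * ((s⁻¹ * a1 - s * a2) * (s⁻¹ * b1 - s * b2) + d1 + d2))
              * K2 x f n
          + (s - s⁻¹) * (q - q⁻¹) * (s⁻¹ * b1 * d2 + s * b2 * d1) * f n :=
  stmt14_general q s a1 a2 b1 b2 d0 d1 d2 d3 d4 hs hs0 hsum hd3 hd4 x h g hx hh hg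
end

section
/- The rescaled Askey–Wilson Zhedanov coefficients are invariant under the partial inversion (a,b,c,d) ↦ (a,b,q/c,q/d): with ã = (q^{-1}abcd)^{1/2}, the five quantities C_1, ã^{-2}C_2, ã^{-1}D, ã^{-1}G_1, ã^{-2}G_2 (where C_1 = (q−q^{-1})², C_2 = q^{-1}(q−q^{-1})²e_4, D = (1−q^{-1})²(e_3+qe_1), G_1 = −q^{-3}(1−q)²(1+q)(e_4+qe_2+q²), G_2 = −q^{-3}(1−q)²(1+q)(e_1e_4+qe_3), e_i the elementary symmetric polynomials of a,b,c,d) are unchanged (up to the consistent choice of square root sign) when (c,d) is replaced by (q/c, q/d). -/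
/-- Zhedanov coefficient `C₂` of the Askey–Wilson algebra. -/
noncomputable def awC2 (q a b c d : ℂ) : ℂ := q⁻¹ * (q - q⁻¹) ^ 2 * (a * b * c * d)

/-- Zhedanov coefficient `D` of the Askey–Wilson algebra. -/
noncomputable def awD (q a b c d : ℂ) : ℂ :=
  (1 - q⁻¹) ^ 2 * ((a * b * c + a * b * d + a * c * d + b * c * d) + q * (a + b + c + d))

/-- Zhedanov coefficient `G₁` of the Askey–Wilson algebra. -/
noncomputable def awG1 (q a b c d : ℂ) : ℂ :=
  -(q⁻¹ ^ 3) * (1 - q) ^ 2 * (1 + q) *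
    (a * b * c * d + q * (a * b + a * c + a * d + b * c + b * d + c * d) + q ^ 2)

/-- Zhedanov coefficient `G₂` of the Askey–Wilson algebra. -/
noncomputable def awG2 (q a b c d : ℂ) : ℂ :=
  -(q⁻¹ ^ 3) * (1 - q) ^ 2 * (1 + q) *
    ((a + b + c + d) * (a * b * c * d) + q * (a * b * c + a * b * d + a * c * d + b * c * d))

/-!
Put `s = q / (c d)`. The substitution `(c, d) ↦ (q / c, q / d)` multiplies `e₄` and
`e₁ e₄ + q e₃` by `s²`, and `e₃ + q e₁` and `e₄ + q e₂ + q²` by `s`; so `C₂, G₂` scale by `s²`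
and `D, G₁` by `s`. Since also `ã'² = s² ã²`, the square root `ã' = s ã` absorbs every factor.
-/

theorem pow_mul_div_mul_pow {G₀ : Type*} [CommGroupWithZero G₀] {s : G₀} (hs : s ≠ 0)
    (x t : G₀) (k : ℕ) : s ^ k * x / (s * t) ^ k = x / t ^ k := by
  rw [mul_pow, mul_div_mul_left _ _ (pow_ne_zero k hs)]

section

variable {q c d : ℂ} (a b : ℂ)

theorem awC2_q_div_q_div (hc : c ≠ 0) (hd : d ≠ 0) :
    awC2 q a b (q / c) (q / d) = (q / (c * d)) ^ 2 * awC2 q a b c d := by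
  simp only [awC2]
  field_simp

theorem awD_q_div_q_div (hc : c ≠ 0) (hd : d ≠ 0) :
    awD q a b (q / c) (q / d) = q / (c * d) * awD q a b c d := by
  simp only [awD]
  field_simp
  ring

theorem awG1_q_div_q_div (hc : c ≠ 0) (hd : d ≠ 0) :
    awG1 q a b (q / c) (q / d) = q / (c * d) * awG1 q a b c d := by
  simp only [awG1]
  field_simp
  ring

theorem awG2_q_div_q_div (hc : c ≠ 0) (hd : d ≠ 0) :
    awG2 q a b (q / c) (q / d) = (q / (c * d)) ^ 2 * awG2 q a b c d := by
  simp only [awG2]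
  field_simp
  ring

end

theorem stmt17_general (q a b c d ta : ℂ)
    (hq : q ≠ 0) (hc : c ≠ 0) (hd : d ≠ 0)
    (hta : ta ^ 2 = q⁻¹ * (a * b * c * d)) (hta0 : ta ≠ 0) :
    ∃ ta' : ℂ, ta' ^ 2 = q⁻¹ * (a * b * (q / c) * (q / d)) ∧ ta' ≠ 0 ∧
      awC2 q a b (q / c) (q / d) / ta' ^ 2 = awC2 q a b c d / ta ^ 2 ∧
      awD q a b (q / c) (q / d) / ta' = awD q a b c d / ta ∧
      awG1 q a b (q / c) (q / d) / ta' = awG1 q a b c d / ta ∧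
      awG2 q a b (q / c) (q / d) / ta' ^ 2 = awG2 q a b c d / ta ^ 2 := by
  have hs : q / (c * d) ≠ 0 := div_ne_zero hq (mul_ne_zero hc hd)
  refine ⟨q / (c * d) * ta, ?_, mul_ne_zero hs hta0, ?_, ?_, ?_, ?_⟩
  · rw [mul_pow, hta]
    field_simp
  · rw [awC2_q_div_q_div a b hc hd, pow_mul_div_mul_pow hs]
  · rw [awD_q_div_q_div a b hc hd, mul_div_mul_left _ _ hs]
  · rw [awG1_q_div_q_div a b hc hd, mul_div_mul_left _ _ hs]
  · rw [awG2_q_div_q_div a b hc hd, pow_mul_div_mul_pow hs]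

/-- The rescaled Askey–Wilson Zhedanov coefficients `C₁, ã⁻²C₂, ã⁻¹D, ã⁻¹G₁, ã⁻²G₂`
are invariant under `(a,b,c,d) ↦ (a,b,q/c,q/d)`, up to a consistent choice of the
square root `ã' = (q⁻¹·ab·(q/c)(q/d))^{1/2}` for the transformed parameters.
(`C₁ = (q−q⁻¹)²` does not depend on the parameters at all, hence is trivially unchanged.) -/
theorem stmt17 (q a b c d ta : ℂ)
    (hq : q ≠ 0) (ha : a ≠ 0) (hb : b ≠ 0) (hc : c ≠ 0) (hd : d ≠ 0)
    (hta : ta ^ 2 = q⁻¹ * (a * b * c * d)) (hta0 : ta ≠ 0) :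
    ∃ ta' : ℂ, ta' ^ 2 = q⁻¹ * (a * b * (q / c) * (q / d)) ∧ ta' ≠ 0 ∧
      awC2 q a b (q / c) (q / d) / ta' ^ 2 = awC2 q a b c d / ta ^ 2 ∧
      awD q a b (q / c) (q / d) / ta' = awD q a b c d / ta ∧
      awG1 q a b (q / c) (q / d) / ta' = awG1 q a b c d / ta ∧
      awG2 q a b (q / c) (q / d) / ta' ^ 2 = awG2 q a b c d / ta ^ 2 :=
  stmt17_general q a b c d ta hq hc hd hta hta0
end
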